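/- arXiv:2106.11706 — 3 statements merged into one kernel-verified Lean document; each statement's English description precedes it below -/
import Mathlib

section
/- Dressing lemma: suppose K⁰(z) is a 2×2 matrix (with entries commuting with everything) satisfying R̃₁₂(z/w) K⁰₁(z) R⁽⁰⁾ K⁰₂(w) = K⁰₂(w) R⁽⁰⁾ K⁰₁(z) R̃₂₁(z/w); suppose L(z) satisfies R̃₁₂(z/w) L₁(z) L₂(w) = L₂(w) L₁(z) R̃₁₂(z/w); suppose L⁰ satisfies R̃₂₁(z/w) (L⁰)₁ (L⁰)₂ = (L⁰)₂ (L⁰)₁ R̃₂₁(z/w); and suppose the cross relations (L⁰)₁ R⁽⁰⁾ L₂(w) = L₂(w) R⁽⁰⁾ (L⁰)₁ and L₁(z) R⁽⁰⁾ (L⁰)₂ = (L⁰)₂ R⁽⁰⁾ L₁(z) hold, with entries of K⁰ commuting with entries of L and L⁰. Then K(z) := L(z) K⁰(z) L⁰ satisfies the Freidel–Maillet equation R̃₁₂(z/w) K₁(z) R⁽⁰⁾ K₂(w) = K₂(w) R⁽⁰⁾ K₁(z) R̃₂₁(z/w). -/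
/-
Write `K(z)₁ = L₁ K⁰₁ L⁰₁` and `K(w)₂ = L₂ K⁰₂ L⁰₂`. The left side of the Freidel–Maillet equation is
turned into the right side by letting factors pass each other: the cross relations move `L⁰₁` past
`L₂` and `L₁` past `L⁰₂` across `R⁽⁰⁾`, central entries let `K⁰` pass any `L`, the RLL relation
carries `R̃₁₂` through `L₁ L₂` to `K⁰₁`, the equation for `K⁰` turns it into `R̃₂₁`, and the
relation for `L⁰` carries `R̃₂₁` out to the right. Only associativity is used, so the argument
lives in an arbitrary semigroup.
-/

open Matrix Kronecker

variable {K : Type*} [Field K] {A : Type*} [Ring A] [Algebra K A]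

/-- The non-symmetric R-matrix `R̃(z)` over the base field. -/
noncomputable def Rtmat (q z : K) : Matrix (Fin 2 × Fin 2) (Fin 2 × Fin 2) K :=
  fun p r =>
    if p = r then (if p.1 = p.2 then 1 else (z - 1) / (z * q - q⁻¹))
    else if p = ((0 : Fin 2), (1 : Fin 2)) ∧ r = ((1 : Fin 2), (0 : Fin 2)) then
      z * (q - q⁻¹) / (z * q - q⁻¹)
    else if p = ((1 : Fin 2), (0 : Fin 2)) ∧ r = ((0 : Fin 2), (1 : Fin 2)) then
      (q - q⁻¹) / (z * q - q⁻¹)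
    else 0

/-- The flip `P` on `K² ⊗ K²`, over the base field. -/
def Pmat : Matrix (Fin 2 × Fin 2) (Fin 2 × Fin 2) K :=
  fun p r => if p.1 = r.2 ∧ p.2 = r.1 then 1 else 0

/-- `R⁽⁰⁾ = diag(1, q⁻¹, q⁻¹, 1)` over the base field. -/
noncomputable def R0mat (q : K) : Matrix (Fin 2 × Fin 2) (Fin 2 × Fin 2) K :=
  fun p r => if p = r then (if p.1 = p.2 then 1 else q⁻¹) else 0

def FreidelMaillet {M : Type*} [Semigroup M] (R S T k₁ k₂ : M) : Prop :=
  R * k₁ * S * k₂ = k₂ * S * k₁ * T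

theorem FreidelMaillet.dress {M : Type*} [Semigroup M] {R S T a b c d e f : M}
    (hK : FreidelMaillet R S T b e) (hRad : R * a * d = d * a * R)
    (hTcf : T * c * f = f * c * T) (hcSd : c * S * d = d * S * c) (haSf : a * S * f = f * S * a)
    (hbd : Commute b d) (hbf : Commute b f) (hae : Commute a e) (hce : Commute c e) :
    FreidelMaillet R S T (a * b * c) (d * e * f) :=
  calc R * (a * b * c) * S * (d * e * f)
      = R * a * b * (c * S * d) * e * f := by simp only [mul_assoc]
    _ = R * a * (b * d) * S * c * e * f := by rw [hcSd]; simp only [mul_assoc]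
    _ = R * a * d * b * S * (c * e) * f := by rw [hbd.eq]; simp only [mul_assoc]
    _ = R * a * d * (b * S * e) * c * f := by rw [hce.eq]; simp only [mul_assoc]
    _ = d * a * (R * b * S * e) * c * f := by rw [hRad]; simp only [mul_assoc]
    _ = d * a * e * S * b * (T * c * f) := by rw [hK]; simp only [mul_assoc]
    _ = d * a * e * S * (b * f) * c * T := by rw [hTcf]; simp only [mul_assoc]
    _ = d * (a * e) * S * f * b * c * T := by rw [hbf.eq]; simp only [mul_assoc]
    _ = d * e * (a * S * f) * b * c * T := by rw [hae.eq]; simp only [mul_assoc]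
    _ = d * e * f * S * (a * b * c) * T := by rw [haSf]; simp only [mul_assoc]

namespace Matrix

variable {l m n o : Type*} [Fintype m] [Fintype o] [DecidableEq o] {α : Type*} [Semiring α]

theorem mul_kronecker_one (M : Matrix l m α) (N : Matrix m n α) :
    (M * N) ⊗ₖ (1 : Matrix o o α) = M ⊗ₖ (1 : Matrix o o α) * N ⊗ₖ (1 : Matrix o o α) := by
  simp only [kronecker_one, blockDiagonal_mul]

theorem one_kronecker_mul (M : Matrix l m α) (N : Matrix m n α) :
    (1 : Matrix o o α) ⊗ₖ (M * N) = (1 : Matrix o o α) ⊗ₖ M * (1 : Matrix o o α) ⊗ₖ N := by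
  simp only [one_kronecker, reindex_apply, blockDiagonal_mul, submatrix_mul_equiv]

theorem commute_kronecker_one_one_kronecker [DecidableEq m] (M : Matrix m m α) (N : Matrix o o α)
    (h : ∀ i j k l, Commute (M i j) (N k l)) :
    Commute (M ⊗ₖ (1 : Matrix o o α)) ((1 : Matrix m m α) ⊗ₖ N) := by
  ext ⟨i, k⟩ ⟨j, l⟩
  simp only [mul_apply, kroneckerMap_apply, one_apply, mul_ite, mul_one, mul_zero, ite_mul,
    one_mul, zero_mul, Fintype.sum_prod_type, Finset.sum_ite_irrel, Finset.sum_ite_eq,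
    Finset.mem_univ, ↓reduceIte, Finset.sum_const_zero, Finset.sum_ite_eq']
  exact (h i j k l).eq

end Matrix

theorem dressing_lemma_general (q z w : K)
    (K0z K0w Lz Lw L0 : Matrix (Fin 2) (Fin 2) A)
    -- entries of K⁰(z) and K⁰(w) are central (commute with everything)
    (hK0zc : ∀ i j : Fin 2, ∀ a : A, Commute (K0z i j) a)
    (hK0wc : ∀ i j : Fin 2, ∀ a : A, Commute (K0w i j) a)
    -- scalar Freidel–Maillet equation for K⁰
    (hK0 : (Rtmat q (z / w)).map (algebraMap K A)
            * (K0z ⊗ₖ (1 : Matrix (Fin 2) (Fin 2) A)) * (R0mat q).map (algebraMap K A)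
            * ((1 : Matrix (Fin 2) (Fin 2) A) ⊗ₖ K0w)
          = ((1 : Matrix (Fin 2) (Fin 2) A) ⊗ₖ K0w) * (R0mat q).map (algebraMap K A)
            * (K0z ⊗ₖ (1 : Matrix (Fin 2) (Fin 2) A))
            * (Pmat * Rtmat q (z / w) * Pmat).map (algebraMap K A))
    -- RLL relation for L
    (hL : (Rtmat q (z / w)).map (algebraMap K A)
            * (Lz ⊗ₖ (1 : Matrix (Fin 2) (Fin 2) A))
            * ((1 : Matrix (Fin 2) (Fin 2) A) ⊗ₖ Lw)
          = ((1 : Matrix (Fin 2) (Fin 2) A) ⊗ₖ Lw)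
            * (Lz ⊗ₖ (1 : Matrix (Fin 2) (Fin 2) A))
            * (Rtmat q (z / w)).map (algebraMap K A))
    -- R̃₂₁-relation for L⁰
    (hL0 : (Pmat * Rtmat q (z / w) * Pmat).map (algebraMap K A)
            * (L0 ⊗ₖ (1 : Matrix (Fin 2) (Fin 2) A))
            * ((1 : Matrix (Fin 2) (Fin 2) A) ⊗ₖ L0)
          = ((1 : Matrix (Fin 2) (Fin 2) A) ⊗ₖ L0)
            * (L0 ⊗ₖ (1 : Matrix (Fin 2) (Fin 2) A))
            * (Pmat * Rtmat q (z / w) * Pmat).map (algebraMap K A))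
    -- cross relations
    (hcross1 : (L0 ⊗ₖ (1 : Matrix (Fin 2) (Fin 2) A)) * (R0mat q).map (algebraMap K A)
            * ((1 : Matrix (Fin 2) (Fin 2) A) ⊗ₖ Lw)
          = ((1 : Matrix (Fin 2) (Fin 2) A) ⊗ₖ Lw) * (R0mat q).map (algebraMap K A)
            * (L0 ⊗ₖ (1 : Matrix (Fin 2) (Fin 2) A)))
    (hcross2 : (Lz ⊗ₖ (1 : Matrix (Fin 2) (Fin 2) A)) * (R0mat q).map (algebraMap K A)
            * ((1 : Matrix (Fin 2) (Fin 2) A) ⊗ₖ L0)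
          = ((1 : Matrix (Fin 2) (Fin 2) A) ⊗ₖ L0) * (R0mat q).map (algebraMap K A)
            * (Lz ⊗ₖ (1 : Matrix (Fin 2) (Fin 2) A))) :
    (Rtmat q (z / w)).map (algebraMap K A)
        * ((Lz * K0z * L0) ⊗ₖ (1 : Matrix (Fin 2) (Fin 2) A))
        * (R0mat q).map (algebraMap K A)
        * ((1 : Matrix (Fin 2) (Fin 2) A) ⊗ₖ (Lw * K0w * L0))
      = ((1 : Matrix (Fin 2) (Fin 2) A) ⊗ₖ (Lw * K0w * L0))
        * (R0mat q).map (algebraMap K A)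
        * ((Lz * K0z * L0) ⊗ₖ (1 : Matrix (Fin 2) (Fin 2) A))
        * (Pmat * Rtmat q (z / w) * Pmat).map (algebraMap K A) := by
  rw [mul_kronecker_one, mul_kronecker_one, one_kronecker_mul, one_kronecker_mul]
  exact FreidelMaillet.dress hK0 hL hL0 hcross1 hcross2
    (commute_kronecker_one_one_kronecker _ _ fun i j _ _ => hK0zc i j _)
    (commute_kronecker_one_one_kronecker _ _ fun i j _ _ => hK0zc i j _)
    (commute_kronecker_one_one_kronecker _ _ fun _ _ k l => (hK0wc k l _).symm)
    (commute_kronecker_one_one_kronecker _ _ fun _ _ k l => (hK0wc k l _).symm)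

theorem dressing_lemma (q z w : K) (hq : q ≠ 0) (hden : (z / w) * q - q⁻¹ ≠ 0)
    (K0z K0w Lz Lw L0 : Matrix (Fin 2) (Fin 2) A)
    -- entries of K⁰(z) and K⁰(w) are central (commute with everything)
    (hK0zc : ∀ i j : Fin 2, ∀ a : A, Commute (K0z i j) a)
    (hK0wc : ∀ i j : Fin 2, ∀ a : A, Commute (K0w i j) a)
    -- scalar Freidel–Maillet equation for K⁰
    (hK0 : (Rtmat q (z / w)).map (algebraMap K A)
            * (K0z ⊗ₖ (1 : Matrix (Fin 2) (Fin 2) A)) * (R0mat q).map (algebraMap K A)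
            * ((1 : Matrix (Fin 2) (Fin 2) A) ⊗ₖ K0w)
          = ((1 : Matrix (Fin 2) (Fin 2) A) ⊗ₖ K0w) * (R0mat q).map (algebraMap K A)
            * (K0z ⊗ₖ (1 : Matrix (Fin 2) (Fin 2) A))
            * (Pmat * Rtmat q (z / w) * Pmat).map (algebraMap K A))
    -- RLL relation for L
    (hL : (Rtmat q (z / w)).map (algebraMap K A)
            * (Lz ⊗ₖ (1 : Matrix (Fin 2) (Fin 2) A))
            * ((1 : Matrix (Fin 2) (Fin 2) A) ⊗ₖ Lw)
          = ((1 : Matrix (Fin 2) (Fin 2) A) ⊗ₖ Lw)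
            * (Lz ⊗ₖ (1 : Matrix (Fin 2) (Fin 2) A))
            * (Rtmat q (z / w)).map (algebraMap K A))
    -- R̃₂₁-relation for L⁰
    (hL0 : (Pmat * Rtmat q (z / w) * Pmat).map (algebraMap K A)
            * (L0 ⊗ₖ (1 : Matrix (Fin 2) (Fin 2) A))
            * ((1 : Matrix (Fin 2) (Fin 2) A) ⊗ₖ L0)
          = ((1 : Matrix (Fin 2) (Fin 2) A) ⊗ₖ L0)
            * (L0 ⊗ₖ (1 : Matrix (Fin 2) (Fin 2) A))
            * (Pmat * Rtmat q (z / w) * Pmat).map (algebraMap K A))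
    -- cross relations
    (hcross1 : (L0 ⊗ₖ (1 : Matrix (Fin 2) (Fin 2) A)) * (R0mat q).map (algebraMap K A)
            * ((1 : Matrix (Fin 2) (Fin 2) A) ⊗ₖ Lw)
          = ((1 : Matrix (Fin 2) (Fin 2) A) ⊗ₖ Lw) * (R0mat q).map (algebraMap K A)
            * (L0 ⊗ₖ (1 : Matrix (Fin 2) (Fin 2) A)))
    (hcross2 : (Lz ⊗ₖ (1 : Matrix (Fin 2) (Fin 2) A)) * (R0mat q).map (algebraMap K A)
            * ((1 : Matrix (Fin 2) (Fin 2) A) ⊗ₖ L0)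
          = ((1 : Matrix (Fin 2) (Fin 2) A) ⊗ₖ L0) * (R0mat q).map (algebraMap K A)
            * (Lz ⊗ₖ (1 : Matrix (Fin 2) (Fin 2) A))) :
    (Rtmat q (z / w)).map (algebraMap K A)
        * ((Lz * K0z * L0) ⊗ₖ (1 : Matrix (Fin 2) (Fin 2) A))
        * (R0mat q).map (algebraMap K A)
        * ((1 : Matrix (Fin 2) (Fin 2) A) ⊗ₖ (Lw * K0w * L0))
      = ((1 : Matrix (Fin 2) (Fin 2) A) ⊗ₖ (Lw * K0w * L0))
        * (R0mat q).map (algebraMap K A)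
        * ((Lz * K0z * L0) ⊗ₖ (1 : Matrix (Fin 2) (Fin 2) A))
        * (Pmat * Rtmat q (z / w) * Pmat).map (algebraMap K A) :=
  dressing_lemma_general q z w K0z K0w Lz Lw L0 hK0zc hK0wc hK0 hL hL0 hcross1 hcross2
end

section
/- In the Drinfeld–Jimbo presentation U_q^{DJ} of U_q(ŝl₂), the elements y⁺ᵢ := Kᵢ⁻¹ − q(q−q⁻¹)Kᵢ⁻¹Eᵢ (i = 0, 1) satisfy the q-Serre relations (y⁺ᵢ)³ y⁺ⱼ − [3]_q (y⁺ᵢ)² y⁺ⱼ y⁺ᵢ + [3]_q y⁺ᵢ y⁺ⱼ (y⁺ᵢ)² − y⁺ⱼ (y⁺ᵢ)³ = 0 for i ≠ j. -/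
/-!
Write `y i = K⁻¹ᵢ (1 - c Eᵢ)` with `c = q (q - q⁻¹)`. Moving every `K⁻¹` to the left with
`Eₐ K⁻¹_b = q^{±2} K⁻¹_b Eₐ`, each term of the q-Serre combination of `y i, y j` becomes
`K⁻¹ⱼ (K⁻¹ᵢ)³` times a word in the `E`'s. The words of length less than four cancel, and the
words of length four add up to `c⁴ K⁻¹ⱼ (K⁻¹ᵢ)³` times the q-Serre element of `Eᵢ, Eⱼ`, which
vanishes.
-/

variable {K : Type*} [Field K] {A : Type*} [Ring A] [Algebra K A]

/-- q-commutator `[x,y]_q = q·xy − q⁻¹·yx`. -/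
noncomputable def qBrk (q : K) (x y : A) : A := q • (x * y) - q⁻¹ • (y * x)

def qSerre (q : K) (a b : A) : A :=
  a ^ 3 * b - (q ^ 2 + 1 + q⁻¹ ^ 2) • (a ^ 2 * b * a)
    + (q ^ 2 + 1 + q⁻¹ ^ 2) • (a * b * a ^ 2) - b * a ^ 3

theorem qSerre_eq_qBrk (q : K) (hq : q ≠ 0) (a b : A) :
    qSerre q a b = a * qBrk q⁻¹ a (qBrk q a b) - qBrk q⁻¹ a (qBrk q a b) * a := by
  simp only [qSerre, qBrk, inv_inv, mul_sub, sub_mul, mul_smul_comm, smul_mul_assoc, smul_sub,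
    smul_smul, pow_succ, pow_zero, one_mul, mul_assoc]
  match_scalars <;> field_simp <;> ring

theorem mul_inverse_eq_smul_inverse_mul (c : K) {u v x : A} (hvu : v * u = 1) (huv : u * v = 1)
    (h : u * x = c • (x * u)) : x * v = c • (v * x) :=
  calc x * v = v * (u * x) * v := by rw [← mul_assoc, hvu, one_mul]
    _ = c • (v * x * (u * v)) := by rw [h, mul_smul_comm, smul_mul_assoc]; simp only [mul_assoc]
    _ = c • (v * x) := by rw [huv, mul_one]

theorem qSerre_sub_smul_mul (q c : K) (hq : q ≠ 0) {u v e f : A} (huv : u * v = v * u)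
    (heu : e * u = q ^ 2 • (u * e)) (hev : e * v = q⁻¹ ^ 2 • (v * e))
    (hfu : f * u = q⁻¹ ^ 2 • (u * f)) :
    qSerre q (u - c • (u * e)) (v - c • (v * f)) = c ^ 4 • (v * u ^ 3 * qSerre q e f) := by
  have heu' (x : A) : e * (u * x) = q ^ 2 • (u * (e * x)) := by
    rw [← mul_assoc, heu, smul_mul_assoc, mul_assoc]
  have hev' (x : A) : e * (v * x) = q⁻¹ ^ 2 • (v * (e * x)) := by
    rw [← mul_assoc, hev, smul_mul_assoc, mul_assoc]
  have hfu' (x : A) : f * (u * x) = q⁻¹ ^ 2 • (u * (f * x)) := by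
    rw [← mul_assoc, hfu, smul_mul_assoc, mul_assoc]
  have huv' (x : A) : u * (v * x) = v * (u * x) := by rw [← mul_assoc, huv, mul_assoc]
  simp only [qSerre, pow_succ, pow_zero, one_mul, mul_sub, sub_mul, mul_add, add_mul, smul_sub,
    smul_add, smul_mul_assoc, mul_smul_comm, smul_smul, mul_assoc,
    heu, hev, hfu, huv, heu', hev', hfu', huv']
  match_scalars <;> field_simp <;> ring

theorem equitable_positive_serre_general
    (q : K) (hq : q ≠ 0)
    (E Kp Km : Fin 2 → A)
    (hKK : ∀ i j, Kp i * Kp j = Kp j * Kp i)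
    (hKinv1 : ∀ i, Kp i * Km i = 1) (hKinv2 : ∀ i, Km i * Kp i = 1)
    (hKE : ∀ i j, Kp i * E j = (if i = j then q ^ 2 else q⁻¹ ^ 2) • (E j * Kp i))
    (hSerreE : ∀ i j, i ≠ j →
        E i * qBrk q⁻¹ (E i) (qBrk q (E i) (E j))
          - qBrk q⁻¹ (E i) (qBrk q (E i) (E j)) * E i = 0)
    (y : Fin 2 → A)
    (hy : ∀ i, y i = Km i - (q * (q - q⁻¹)) • (Km i * E i)) :
    ∀ i j, i ≠ j →
      y i ^ 3 * y j - (q ^ 2 + 1 + q⁻¹ ^ 2) • (y i ^ 2 * y j * y i)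
        + (q ^ 2 + 1 + q⁻¹ ^ 2) • (y i * y j * y i ^ 2) - y j * y i ^ 3 = 0 := by
  intro i j hij
  have hEKm (a b : Fin 2) :
      E a * Km b = (if b = a then q ^ 2 else q⁻¹ ^ 2) • (Km b * E a) :=
    mul_inverse_eq_smul_inverse_mul _ (hKinv2 b) (hKinv1 b) (hKE b a)
  have hKmKm : Km i * Km j = Km j * Km i := by
    have hKpKm : Kp i * Km j = (1 : K) • (Km j * Kp i) :=
      mul_inverse_eq_smul_inverse_mul 1 (hKinv2 j) (hKinv1 j) (by rw [one_smul, hKK])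
    simpa using (mul_inverse_eq_smul_inverse_mul 1 (hKinv2 i) (hKinv1 i) hKpKm).symm
  have hexpand := qSerre_sub_smul_mul q (q * (q - q⁻¹)) hq hKmKm
    (by simpa using hEKm i i) (by simpa [hij.symm] using hEKm i j) (by simpa [hij] using hEKm j i)
  change qSerre q (y i) (y j) = 0
  rw [hy, hy, hexpand, qSerre_eq_qBrk q hq, hSerreE i j hij, mul_zero, smul_zero]

theorem equitable_positive_serre
    (q : K) (hq : q ≠ 0) (hq2 : q ^ 2 ≠ 1)
    (E F Kp Km : Fin 2 → A)
    (hKK : ∀ i j, Kp i * Kp j = Kp j * Kp i)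
    (hKinv1 : ∀ i, Kp i * Km i = 1) (hKinv2 : ∀ i, Km i * Kp i = 1)
    (hKE : ∀ i j, Kp i * E j = (if i = j then q ^ 2 else q⁻¹ ^ 2) • (E j * Kp i))
    (hKF : ∀ i j, Kp i * F j = (if i = j then q⁻¹ ^ 2 else q ^ 2) • (F j * Kp i))
    (hEF : ∀ i j, E i * F j - F j * E i
        = if i = j then (q - q⁻¹)⁻¹ • (Kp i - Km i) else 0)
    (hSerreE : ∀ i j, i ≠ j →
        E i * qBrk q⁻¹ (E i) (qBrk q (E i) (E j))
          - qBrk q⁻¹ (E i) (qBrk q (E i) (E j)) * E i = 0)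
    (hSerreF : ∀ i j, i ≠ j →
        F i * qBrk q⁻¹ (F i) (qBrk q (F i) (F j))
          - qBrk q⁻¹ (F i) (qBrk q (F i) (F j)) * F i = 0)
    (y : Fin 2 → A)
    (hy : ∀ i, y i = Km i - (q * (q - q⁻¹)) • (Km i * E i)) :
    ∀ i j, i ≠ j →
      y i ^ 3 * y j - (q ^ 2 + 1 + q⁻¹ ^ 2) • (y i ^ 2 * y j * y i)
        + (q ^ 2 + 1 + q⁻¹ ^ 2) • (y i * y j * y i ^ 2) - y j * y i ^ 3 = 0 :=
  equitable_positive_serre_general q hq E Kp Km hKK hKinv1 hKinv2 hKE hSerreE y hy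
end

section
/- There exists an algebra automorphism σ of the algebra 𝒰_q^{T,+} (the alternating central extension, defined by relations (def1)–(def11)) determined by σ(y⁺₋ₖ) = y⁺ₖ₊₁, σ(y⁺ₖ₊₁) = y⁺₋ₖ, σ(z⁺ₖ₊₁) = z̃⁺ₖ₊₁, σ(z̃⁺ₖ₊₁) = z⁺ₖ₊₁ for all k ∈ ℕ, and σ² = id. -/
/- STATEMENT 13: the alternating central extension 𝒰_q^{T,+} (presented by relations
   (def1)-(def11)) admits an algebra automorphism σ with
   σ(y⁺₋ₖ) = y⁺ₖ₊₁, σ(y⁺ₖ₊₁) = y⁺₋ₖ, σ(z⁺ₖ₊₁) = z̃⁺ₖ₊₁, σ(z̃⁺ₖ₊₁) = z⁺ₖ₊₁, and σ² = id. -/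

noncomputable section

/-- The base field ℚ(q). -/
abbrev KK : Type := RatFunc ℚ

/-- The indeterminate q ∈ ℚ(q). -/
def qq : KK := RatFunc.X

/-- ρ̄ = q⁻¹(q²−q⁻²)². -/
def ρbar : KK := qq⁻¹ * (qq ^ 2 - qq⁻¹ ^ 2) ^ 2

/-- Generators of 𝒰_q^{T,+}: `ym k` is y⁺₋ₖ, `yp k` is y⁺ₖ₊₁, `z k` is z⁺ₖ₊₁,
`zt k` is z̃⁺ₖ₊₁. -/
inductive Gen : Type
  | ym (k : ℕ) | yp (k : ℕ) | z (k : ℕ) | zt (k : ℕ)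

namespace UqTplus

abbrev FA : Type := FreeAlgebra KK Gen

def Ym (k : ℕ) : FA := FreeAlgebra.ι KK (Gen.ym k)
def Yp (k : ℕ) : FA := FreeAlgebra.ι KK (Gen.yp k)
def Z (k : ℕ) : FA := FreeAlgebra.ι KK (Gen.z k)
def Zt (k : ℕ) : FA := FreeAlgebra.ι KK (Gen.zt k)

/-- The defining relations (def1)-(def11) of the alternating central extension. -/
inductive rel : FA → FA → Prop
  -- (def1)
  | r1a (k : ℕ) : rel (Yp 0 * Ym k - Ym k * Yp 0) ((qq + qq⁻¹)⁻¹ • (Z k - Zt k))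
  | r1b (k : ℕ) : rel (Yp k * Ym 0 - Ym 0 * Yp k) ((qq + qq⁻¹)⁻¹ • (Z k - Zt k))
  -- (def2)
  | r2a (k : ℕ) : rel (qq • (Yp 0 * Zt k) - qq⁻¹ • (Zt k * Yp 0)) (ρbar • Yp (k + 1))
  | r2b (k : ℕ) : rel (qq • (Z k * Yp 0) - qq⁻¹ • (Yp 0 * Z k)) (ρbar • Yp (k + 1))
  -- (def3)
  | r3a (k : ℕ) : rel (qq • (Zt k * Ym 0) - qq⁻¹ • (Ym 0 * Zt k)) (ρbar • Ym (k + 1))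
  | r3b (k : ℕ) : rel (qq • (Ym 0 * Z k) - qq⁻¹ • (Z k * Ym 0)) (ρbar • Ym (k + 1))
  -- (def4)
  | r4a (k l : ℕ) : rel (Yp k * Yp l) (Yp l * Yp k)
  | r4b (k l : ℕ) : rel (Ym k * Ym l) (Ym l * Ym k)
  -- (def5)
  | r5 (k l : ℕ) :
      rel ((Yp k * Ym l - Ym l * Yp k) + (Ym k * Yp l - Yp l * Ym k)) 0
  -- (def6)
  | r6 (k l : ℕ) :
      rel ((Yp k * Zt l - Zt l * Yp k) + (Zt k * Yp l - Yp l * Zt k)) 0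
  -- (def7)
  | r7 (k l : ℕ) :
      rel ((Yp k * Z l - Z l * Yp k) + (Z k * Yp l - Yp l * Z k)) 0
  -- (def8)
  | r8 (k l : ℕ) :
      rel ((Ym k * Zt l - Zt l * Ym k) + (Zt k * Ym l - Ym l * Zt k)) 0
  -- (def9)
  | r9 (k l : ℕ) :
      rel ((Ym k * Z l - Z l * Ym k) + (Z k * Ym l - Ym l * Z k)) 0
  -- (def10)
  | r10a (k l : ℕ) : rel (Zt k * Zt l) (Zt l * Zt k)
  | r10b (k l : ℕ) : rel (Z k * Z l) (Z l * Z k)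
  -- (def11)
  | r11 (k l : ℕ) :
      rel ((Z k * Zt l - Zt l * Z k) + (Zt k * Z l - Z l * Zt k)) 0

/-- The alternating central extension 𝒰_q^{T,+}. -/
abbrev U : Type := RingQuot rel

/-- The image of a generator in 𝒰_q^{T,+}. -/
def g (x : Gen) : U := RingQuot.mkAlgHom KK rel (FreeAlgebra.ι KK x)

end UqTplus

/-! The involution of the generators exchanging `y⁺₋ₖ ↔ y⁺ₖ₊₁` and `z⁺ₖ₊₁ ↔ z̃⁺ₖ₊₁` permutes
the defining relations, except that (def5) and (def11) come back with their two summands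
exchanged and (def1a) ↔ (def1b) only after negating both sides. So it descends to an algebra
endomorphism σ of 𝒰_q^{T,+}, and σ² = id because this holds on generators. -/

namespace RingQuot

variable {S A : Type*} [CommSemiring S] [Semiring A] [Algebra S A] {s : A → A → Prop}

def descendAlgHom (τ : A →ₐ[S] A)
    (hτ : ∀ ⦃a b⦄, s a b → mkAlgHom S s (τ a) = mkAlgHom S s (τ b)) :
    RingQuot s →ₐ[S] RingQuot s :=
  liftAlgHom S ⟨(mkAlgHom S s).comp τ, hτ⟩

variable {τ : A →ₐ[S] A} {hτ : ∀ ⦃a b⦄, s a b → mkAlgHom S s (τ a) = mkAlgHom S s (τ b)}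

@[simp]
theorem descendAlgHom_mkAlgHom (a : A) :
    descendAlgHom τ hτ (mkAlgHom S s a) = mkAlgHom S s (τ a) :=
  liftAlgHom_mkAlgHom_apply S _ _ a

theorem descendAlgHom_comp_self (hinv : τ.comp τ = AlgHom.id S A) :
    (descendAlgHom τ hτ).comp (descendAlgHom τ hτ) = AlgHom.id S (RingQuot s) :=
  ringQuot_ext' S _ _ <| AlgHom.ext fun a => by
    simpa using congrArg (mkAlgHom S s) (AlgHom.congr_fun hinv a)

end RingQuot

theorem FreeAlgebra.lift_ι_comp_self_of_involutive {R X : Type*} [CommSemiring R]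
    {e : X → X} (he : Function.Involutive e) :
    (lift R (ι R ∘ e)).comp (lift R (ι R ∘ e)) = AlgHom.id R (FreeAlgebra R X) :=
  hom_ext <| funext fun x => by simp [he x]

def Gen.swap : Gen → Gen
  | .ym k => .yp k
  | .yp k => .ym k
  | .z k => .zt k
  | .zt k => .z k

theorem Gen.swap_involutive : Function.Involutive Gen.swap := by
  rintro (k | k | k | k) <;> rfl

namespace UqTplus

def swapHom : FA →ₐ[KK] FA := FreeAlgebra.lift KK (FreeAlgebra.ι KK ∘ Gen.swap)

@[simp] theorem swapHom_Ym (k : ℕ) : swapHom (Ym k) = Yp k := FreeAlgebra.lift_ι_apply _ _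
@[simp] theorem swapHom_Yp (k : ℕ) : swapHom (Yp k) = Ym k := FreeAlgebra.lift_ι_apply _ _
@[simp] theorem swapHom_Z (k : ℕ) : swapHom (Z k) = Zt k := FreeAlgebra.lift_ι_apply _ _
@[simp] theorem swapHom_Zt (k : ℕ) : swapHom (Zt k) = Z k := FreeAlgebra.lift_ι_apply _ _

theorem mkAlgHom_swapHom_of_rel ⦃a b : FA⦄ (h : rel a b) :
    RingQuot.mkAlgHom KK rel (swapHom a) = RingQuot.mkAlgHom KK rel (swapHom b) := by
  induction h
  case r1a k =>
    simpa only [map_sub, map_mul, map_smul, swapHom_Ym, swapHom_Yp, swapHom_Z, swapHom_Zt,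
      smul_sub, neg_sub] using congrArg Neg.neg (RingQuot.mkAlgHom_rel KK (rel.r1b k))
  case r1b k =>
    simpa only [map_sub, map_mul, map_smul, swapHom_Ym, swapHom_Yp, swapHom_Z, swapHom_Zt,
      smul_sub, neg_sub] using congrArg Neg.neg (RingQuot.mkAlgHom_rel KK (rel.r1a k))
  all_goals
    refine RingQuot.mkAlgHom_rel KK ?_
    simp only [map_sub, map_add, map_mul, map_smul, map_zero, swapHom_Ym, swapHom_Yp,
      swapHom_Z, swapHom_Zt]
  case r2a k => exact .r3b k
  case r2b k => exact .r3a k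
  case r3a k => exact .r2b k
  case r3b k => exact .r2a k
  case r4a k l => exact .r4b k l
  case r4b k l => exact .r4a k l
  case r5 k l => rw [add_comm]; exact .r5 k l
  case r6 k l => exact .r9 k l
  case r7 k l => exact .r8 k l
  case r8 k l => exact .r7 k l
  case r9 k l => exact .r6 k l
  case r10a k l => exact .r10b k l
  case r10b k l => exact .r10a k l
  case r11 k l => rw [add_comm]; exact .r11 k l

def σ : U →ₐ[KK] U := RingQuot.descendAlgHom swapHom mkAlgHom_swapHom_of_rel

theorem σ_comp_self : σ.comp σ = AlgHom.id KK U :=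
  RingQuot.descendAlgHom_comp_self <|
    FreeAlgebra.lift_ι_comp_self_of_involutive Gen.swap_involutive

theorem σ_g (x : Gen) : σ (g x) = g x.swap :=
  (RingQuot.descendAlgHom_mkAlgHom _).trans (congrArg _ (FreeAlgebra.lift_ι_apply _ _))

theorem exists_automorphism_sigma :
    ∃ σ : U ≃ₐ[KK] U,
      (∀ k : ℕ, σ (g (Gen.ym k)) = g (Gen.yp k))
      ∧ (∀ k : ℕ, σ (g (Gen.yp k)) = g (Gen.ym k))
      ∧ (∀ k : ℕ, σ (g (Gen.z k)) = g (Gen.zt k))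
      ∧ (∀ k : ℕ, σ (g (Gen.zt k)) = g (Gen.z k))
      ∧ (∀ x : U, σ (σ x) = x) :=
  ⟨AlgEquiv.ofAlgHom σ σ σ_comp_self σ_comp_self, fun _ => σ_g _, fun _ => σ_g _,
    fun _ => σ_g _, fun _ => σ_g _, AlgHom.congr_fun σ_comp_self⟩

end UqTplus
end
end
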